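/- Let {u_n} be a sequence of unit vectors in ℝ², let S_u denote Steiner symmetrization in direction u, and let T_n = S_{u_n} ∘ ⋯ ∘ S_{u_1}. Suppose that for every nonempty compact set K ⊆ ℝ², the sequence {T_n K} (taking Steiner symmetrals with closed segments) converges in the Hausdorff distance to the closed ball K* centered at the origin with λ(K*) = λ(K). Then for every Lebesgue measurable set M ⊆ ℝ² of finite Lebesgue measure, λ(T_n M Δ M*) → 0 as n → ∞, where M* is the ball centered at the origin with λ(M*) = λ(M). -/

import Mathlib

/-!
Steiner symmetrization preserves Lebesgue measure (Fubini in coordinates adapted to the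
direction) and is monotone, and the open-segment symmetral lies inside the closed-segment one.
Approximate `M` from inside by a compact `K` with `λ(M \ K) < δ`. Then `T_n K ⊆ T_n M` with
`λ(T_n M \ T_n K) < δ`, while by hypothesis `T_n K` eventually lies in a thin closed
neighbourhood `D` of `M*` with `λ(D \ M*) < δ`. Squeezing `T_n M` and `M*` between `T_n K`
and `D` gives `λ(T_n M Δ M*) ≤ 4δ`.
-/

open MeasureTheory Filter Topology

/-- The plane `ℝ²`. -/
abbrev Plane := EuclideanSpace ℝ (Fin 2)

/-- The Steiner symmetral (with *closed* segments, suitable for compact sets) of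
`K ⊆ ℝ²` in the direction of the unit vector `u`. -/
noncomputable def steinerSymmetralClosed (u : Plane) (K : Set Plane) : Set Plane :=
  {y | ∃ (x : Plane) (t : ℝ), inner ℝ x u = (0 : ℝ) ∧ y = x + t • u ∧
    {s : ℝ | x + s • u ∈ K}.Nonempty ∧
    ENNReal.ofReal (2 * |t|) ≤ volume {s : ℝ | x + s • u ∈ K}}

/-- The Steiner symmetral (with *open* segments, suitable for measurable sets) of
`M ⊆ ℝ²` in the direction of the unit vector `u`. -/
noncomputable def steinerSymmetral (u : Plane) (M : Set Plane) : Set Plane :=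
  {y | ∃ (x : Plane) (t : ℝ), inner ℝ x u = (0 : ℝ) ∧ y = x + t • u ∧
    ENNReal.ofReal (2 * |t|) < volume {s : ℝ | x + s • u ∈ M}}

/-- The Steiner process with closed segments: `T n = S_{u_n} ∘ ⋯ ∘ S_{u_1}`
(with 1-based indexing of the directions, so `u n` is the `(n+1)`-st direction). -/
noncomputable def steinerProcessClosed (u : ℕ → Plane) : ℕ → Set Plane → Set Plane
  | 0, M => M
  | n + 1, M => steinerSymmetralClosed (u n) (steinerProcessClosed u n M)

/-- The Steiner process with open segments: `T n = S_{u_n} ∘ ⋯ ∘ S_{u_1}`. -/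
noncomputable def steinerProcess (u : ℕ → Plane) : ℕ → Set Plane → Set Plane
  | 0, M => M
  | n + 1, M => steinerSymmetral (u n) (steinerProcess u n M)

open Set Metric
open scoped ENNReal

section ProdModel

variable {α : Type*} [MeasurableSpace α]

def steinerSymmetralProd (M : Set (α × ℝ)) : Set (α × ℝ) :=
  {p | ENNReal.ofReal (2 * |p.2|) < volume (Prod.mk p.1 ⁻¹' M)}

lemma volume_setOf_ofReal_two_mul_abs_lt (c : ℝ≥0∞) :
    volume {t : ℝ | ENNReal.ofReal (2 * |t|) < c} = c := by
  rcases eq_or_ne c ∞ with rfl | hc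
  · simp only [ENNReal.ofReal_lt_top, ofPred_true, Real.volume_univ]
  · have h : {t : ℝ | ENNReal.ofReal (2 * |t|) < c} = ball 0 (c.toReal / 2) := by
      ext t
      rw [mem_ofPred_eq, ENNReal.ofReal_lt_iff_lt_toReal (by positivity) hc, mem_ball_zero_iff,
        Real.norm_eq_abs]
      constructor <;> intro <;> linarith
    rw [h, Real.volume_ball, mul_div_cancel₀ _ two_ne_zero, ENNReal.ofReal_toReal hc]

lemma measurableSet_steinerSymmetralProd {M : Set (α × ℝ)} (hM : MeasurableSet M) :
    MeasurableSet (steinerSymmetralProd M) :=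
  measurableSet_lt (by fun_prop) ((measurable_measure_prodMk_left hM).comp measurable_fst)

lemma measure_steinerSymmetralProd (μ : Measure α) [SFinite μ] {M : Set (α × ℝ)}
    (hM : MeasurableSet M) : μ.prod volume (steinerSymmetralProd M) = μ.prod volume M := by
  rw [Measure.prod_apply (measurableSet_steinerSymmetralProd hM), Measure.prod_apply hM]
  exact lintegral_congr fun a => volume_setOf_ofReal_two_mul_abs_lt (volume (Prod.mk a ⁻¹' M))

end ProdModel

section Coordinates

variable {F : Type*} [NormedAddCommGroup F] [InnerProductSpace ℝ F] [MeasurableSpace F]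
  [BorelSpace F]

noncomputable def OrthonormalBasis.coordEquiv (b : OrthonormalBasis (Fin 2) ℝ F) :
    (ℝ × ℝ) ≃ᵐ F :=
  MeasurableEquiv.finTwoArrow.symm.trans
    ((MeasurableEquiv.toLp 2 (Fin 2 → ℝ)).trans b.measurableEquiv.symm)

lemma OrthonormalBasis.coordEquiv_apply (b : OrthonormalBasis (Fin 2) ℝ F) (a t : ℝ) :
    b.coordEquiv (a, t) = a • b 0 + t • b 1 := by
  simp [coordEquiv, OrthonormalBasis.measurableEquiv, ← b.sum_repr_symm, Fin.sum_univ_two]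

lemma OrthonormalBasis.measurePreserving_coordEquiv [FiniteDimensional ℝ F]
    (b : OrthonormalBasis (Fin 2) ℝ F) :
    MeasurePreserving b.coordEquiv :=
  b.measurePreserving_measurableEquiv.symm.comp
    ((PiLp.volume_preserving_toLp (Fin 2)).comp (volume_preserving_finTwoArrow ℝ).symm)

end Coordinates

lemma exists_orthonormalBasis_apply_one {u : Plane} (hu : ‖u‖ = 1) :
    ∃ b : OrthonormalBasis (Fin 2) ℝ Plane, b 1 = u := by
  have hv : Orthonormal ℝ (({1} : Set (Fin 2)).domRestrict fun _ => u) := by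
    rw [orthonormal_iff_ite]
    rintro ⟨i, rfl⟩ ⟨j, rfl⟩
    simp [hu]
  obtain ⟨b, hb⟩ := hv.exists_orthonormalBasis_extension_of_card_eq (by simp)
  exact ⟨b, hb 1 rfl⟩

lemma preimage_coordEquiv_steinerSymmetral (b : OrthonormalBasis (Fin 2) ℝ Plane)
    (M : Set Plane) :
    b.coordEquiv ⁻¹' steinerSymmetral (b 1) M =
      steinerSymmetralProd (b.coordEquiv ⁻¹' M) := by
  have slice (a : ℝ) :
      Prod.mk a ⁻¹' (b.coordEquiv ⁻¹' M) = {s | a • b 0 + s • b 1 ∈ M} := by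
    ext s; simp [b.coordEquiv_apply]
  ext ⟨a, t⟩
  simp only [steinerSymmetral, steinerSymmetralProd, mem_preimage, mem_ofPred_eq, slice,
    b.coordEquiv_apply]
  constructor
  · rintro ⟨x, t', hx, heq, hlt⟩
    have hx : x = inner ℝ (b 0) x • b 0 := by
      simpa [Fin.sum_univ_two, hx, real_inner_comm] using (b.sum_repr' x).symm
    obtain ⟨rfl, rfl⟩ : (a, t) = (inner ℝ (b 0) x, t') := by
      apply b.coordEquiv.injective
      rw [b.coordEquiv_apply, b.coordEquiv_apply, heq, ← hx]
    rwa [← hx]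
  · intro h
    exact ⟨a • b 0, t, by simp [inner_smul_left, b.orthonormal.inner_eq_zero], rfl, h⟩

lemma measurableSet_steinerSymmetral {u : Plane} (hu : ‖u‖ = 1) {M : Set Plane}
    (hM : MeasurableSet M) : MeasurableSet (steinerSymmetral u M) := by
  obtain ⟨b, rfl⟩ := exists_orthonormalBasis_apply_one hu
  rw [← b.coordEquiv.measurableSet_preimage, preimage_coordEquiv_steinerSymmetral]
  exact measurableSet_steinerSymmetralProd (b.coordEquiv.measurableSet_preimage.2 hM)

lemma volume_steinerSymmetral {u : Plane} (hu : ‖u‖ = 1) {M : Set Plane}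
    (hM : MeasurableSet M) : volume (steinerSymmetral u M) = volume M := by
  obtain ⟨b, rfl⟩ := exists_orthonormalBasis_apply_one hu
  have he := b.measurePreserving_coordEquiv
  rw [← he.measure_preimage_equiv, preimage_coordEquiv_steinerSymmetral, Measure.volume_eq_prod,
    measure_steinerSymmetralProd _ (b.coordEquiv.measurableSet_preimage.2 hM),
    ← Measure.volume_eq_prod, he.measure_preimage_equiv]

lemma steinerSymmetral_mono (u : Plane) {M N : Set Plane} (h : M ⊆ N) :
    steinerSymmetral u M ⊆ steinerSymmetral u N := by
  rintro _ ⟨x, t, hx, rfl, hlt⟩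
  exact ⟨x, t, hx, rfl, hlt.trans_le (measure_mono fun s hs => h hs)⟩

lemma steinerSymmetralClosed_mono (u : Plane) {M N : Set Plane} (h : M ⊆ N) :
    steinerSymmetralClosed u M ⊆ steinerSymmetralClosed u N := by
  rintro _ ⟨x, t, hx, rfl, hne, hle⟩
  exact ⟨x, t, hx, rfl, hne.mono fun s hs => h hs, hle.trans (measure_mono fun s hs => h hs)⟩

lemma steinerSymmetral_subset_steinerSymmetralClosed (u : Plane) (M : Set Plane) :
    steinerSymmetral u M ⊆ steinerSymmetralClosed u M := by
  rintro _ ⟨x, t, hx, rfl, hlt⟩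
  exact ⟨x, t, hx, rfl, nonempty_of_measure_ne_zero (ne_bot_of_gt hlt), hlt.le⟩

section

variable {u : ℕ → Plane}

lemma measurableSet_steinerProcess (hu : ∀ n, ‖u n‖ = 1) {M : Set Plane}
    (hM : MeasurableSet M) : ∀ n, MeasurableSet (steinerProcess u n M)
  | 0 => hM
  | n + 1 => measurableSet_steinerSymmetral (hu n) (measurableSet_steinerProcess hu hM n)

lemma volume_steinerProcess (hu : ∀ n, ‖u n‖ = 1) {M : Set Plane}
    (hM : MeasurableSet M) : ∀ n, volume (steinerProcess u n M) = volume M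
  | 0 => rfl
  | n + 1 => (volume_steinerSymmetral (hu n) (measurableSet_steinerProcess hu hM n)).trans
      (volume_steinerProcess hu hM n)

lemma steinerProcess_mono {K M : Set Plane} (h : K ⊆ M) :
    ∀ n, steinerProcess u n K ⊆ steinerProcess u n M
  | 0 => h
  | n + 1 => steinerSymmetral_mono (u n) (steinerProcess_mono h n)

lemma steinerProcessClosed_mono {K M : Set Plane} (h : K ⊆ M) :
    ∀ n, steinerProcessClosed u n K ⊆ steinerProcessClosed u n M
  | 0 => h
  | n + 1 => steinerSymmetralClosed_mono (u n) (steinerProcessClosed_mono h n)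

lemma steinerProcess_subset_steinerProcessClosed (M : Set Plane) :
    ∀ n, steinerProcess u n M ⊆ steinerProcessClosed u n M
  | 0 => subset_rfl
  | n + 1 => (steinerSymmetral_mono (u n) (steinerProcess_subset_steinerProcessClosed M n)).trans
      (steinerSymmetral_subset_steinerSymmetralClosed (u n) _)

end

lemma exists_volume_closedBall_eq {c : ℝ≥0∞} (hc : c ≠ ∞) :
    ∃ r, 0 ≤ r ∧ volume (closedBall (0 : Plane) r) = c := by
  refine ⟨√(c / ENNReal.ofReal Real.pi).toReal, Real.sqrt_nonneg _, ?_⟩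
  have hπ : ENNReal.ofReal Real.pi ≠ 0 := by simp [Real.pi_pos]
  rw [EuclideanSpace.volume_closedBall_fin_two, ← ENNReal.ofReal_pow (Real.sqrt_nonneg _),
    Real.sq_sqrt ENNReal.toReal_nonneg, ENNReal.ofReal_toReal (ENNReal.div_ne_top hc hπ),
    ENNReal.div_mul_cancel hπ ENNReal.ofReal_ne_top]

lemma le_of_volume_closedBall_le {r s : ℝ} (hr : 0 ≤ r)
    (h : volume (closedBall (0 : Plane) s) ≤ volume (closedBall (0 : Plane) r)) :
    s ≤ r := by
  have hπ : ENNReal.ofReal Real.pi ≠ 0 := by simp [Real.pi_pos]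
  rw [EuclideanSpace.volume_closedBall_fin_two, EuclideanSpace.volume_closedBall_fin_two,
    ENNReal.mul_le_mul_iff_left hπ ENNReal.ofReal_ne_top] at h
  exact (ENNReal.ofReal_le_ofReal_iff hr).1 ((ENNReal.pow_le_pow_left_iff two_ne_zero).1 h)

lemma IsCompact.exists_pos_measure_cthickening_lt {X : Type*} [MetricSpace X] [MeasurableSpace X]
    [OpensMeasurableSpace X] [ProperSpace X] {μ : Measure X} [IsFiniteMeasureOnCompacts μ]
    {s : Set X} (hs : IsCompact s) {c : ℝ≥0∞} (h : μ s < c) :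
    ∃ δ, 0 < δ ∧ μ (cthickening δ s) < c := by
  obtain ⟨δ, hδc, hδ⟩ := (((tendsto_measure_cthickening_of_isCompact hs).eventually
    (gt_mem_nhds h)).filter_mono nhdsWithin_le_nhds |>.and
    (self_mem_nhdsWithin (a := (0 : ℝ)) (s := Ioi 0))).exists
  exact ⟨δ, hδ, hδc⟩

lemma subset_cthickening_of_hausdorffEDist_le {X : Type*} [PseudoEMetricSpace X]
    {s t : Set X} {δ : ℝ} (h : hausdorffEDist s t ≤ ENNReal.ofReal δ) :
    s ⊆ cthickening δ t :=
  fun _ hx => (infEDist_le_hausdorffEDist_of_mem hx).trans h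

lemma measure_symmDiff_le_of_subset {X : Type*} [MeasurableSpace X] (μ : Measure X)
    {A B P D : Set X} (hPA : P ⊆ A) (hPD : P ⊆ D) (hBD : B ⊆ D) :
    μ (symmDiff A B) ≤ μ (A \ P) + μ (D \ B) + μ (D \ P) := by
  refine (measure_mono ?_).trans
    ((measure_union_le _ _).trans (add_le_add_left (measure_union_le _ _) _))
  rintro x (⟨hxA, hxB⟩ | ⟨hxB, hxA⟩)
  · by_cases hxP : x ∈ P
    · exact Or.inl (Or.inr ⟨hPD hxP, hxB⟩)
    · exact Or.inl (Or.inl ⟨hxA, hxP⟩)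
  · exact Or.inr ⟨hBD hxB, fun hxP => hxA (hPA hxP)⟩

lemma measure_symmDiff_le_four_mul {X : Type*} [MeasurableSpace X] (μ : Measure X)
    {A B P D : Set X} (hPA : P ⊆ A) (hPD : P ⊆ D) (hBD : B ⊆ D) (hP : NullMeasurableSet P μ)
    (hB : NullMeasurableSet B μ) (hPfin : μ P ≠ ∞) (hBfin : μ B ≠ ∞) {δ : ℝ≥0∞}
    (hAP : μ A ≤ μ P + δ) (hDB : μ D ≤ μ B + δ) (hBA : μ B ≤ μ A) :
    μ (symmDiff A B) ≤ 4 * δ :=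
  calc μ (symmDiff A B) ≤ μ (A \ P) + μ (D \ B) + μ (D \ P) :=
        measure_symmDiff_le_of_subset μ hPA hPD hBD
    _ ≤ δ + δ + 2 * δ := by
        gcongr
        · exact (measure_sdiff_le_iff_le_add hP hPA hPfin).2 hAP
        · exact (measure_sdiff_le_iff_le_add hB hBD hBfin).2 hDB
        · rw [measure_sdiff_le_iff_le_add hP hPD hPfin, two_mul, ← add_assoc]
          exact hDB.trans (add_le_add (hBA.trans hAP) le_rfl)
    _ = 4 * δ := by ring

lemma eventually_steinerProcess_subset_cthickening {u : ℕ → Plane}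
    (hcompact : ∀ K : Set Plane, IsCompact K → K.Nonempty →
      ∀ r : ℝ, 0 ≤ r → volume (closedBall (0 : Plane) r) = volume K →
        Tendsto (fun n => hausdorffEDist (steinerProcessClosed u n K)
          (closedBall (0 : Plane) r)) atTop (𝓝 0))
    {K : Set Plane} (hK : IsCompact K) {r : ℝ} (hr : 0 ≤ r)
    (hKr : volume K ≤ volume (closedBall (0 : Plane) r)) {δ : ℝ} (hδ : 0 < δ) :
    ∀ᶠ n in atTop, steinerProcess u n K ⊆ cthickening δ (closedBall 0 r) := by
  -- `hcompact` needs a nonempty set; adding a point changes neither the measure nor the bound.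
  have hK'vol : volume (insert 0 K) = volume K := measure_congr (insert_ae_eq_self 0 K)
  obtain ⟨s, hs, hsvol⟩ :=
    exists_volume_closedBall_eq ((hK.insert 0).measure_lt_top (μ := volume)).ne
  have hsr : s ≤ r := le_of_volume_closedBall_le hr (by rwa [hsvol, hK'vol])
  have hconv := hcompact _ (hK.insert 0) (insert_nonempty 0 K) s hs hsvol
  filter_upwards [hconv.eventually (ge_mem_nhds (ENNReal.ofReal_pos.2 hδ))] with n hn
  calc steinerProcess u n K ⊆ steinerProcessClosed u n K :=
        steinerProcess_subset_steinerProcessClosed K n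
    _ ⊆ steinerProcessClosed u n (insert 0 K) := steinerProcessClosed_mono (subset_insert 0 K) n
    _ ⊆ cthickening δ (closedBall 0 s) := subset_cthickening_of_hausdorffEDist_le hn
    _ ⊆ cthickening δ (closedBall 0 r) :=
        cthickening_subset_of_subset δ (closedBall_subset_closedBall hsr)

/-- Suppose the Steiner process `T_n = S_{u_n} ∘ ⋯ ∘ S_{u_1}` is such
that, for every nonempty compact `K ⊆ ℝ²`, the sequence `T_n K` (with closed segments)
converges in the Hausdorff distance to the closed ball `K*` centered at the origin with
`λ(K*) = λ(K)`.  Then for every measurable `M ⊆ ℝ²` of finite measure,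
`λ(T_n M Δ M*) → 0`, where `M*` is the ball centered at the origin with `λ(M*) = λ(M)`. -/
theorem stmt_5 (u : ℕ → Plane) (hu : ∀ n, ‖u n‖ = 1)
    (hcompact : ∀ K : Set Plane, IsCompact K → K.Nonempty →
      ∀ r : ℝ, 0 ≤ r → volume (Metric.closedBall (0 : Plane) r) = volume K →
        Tendsto (fun n => EMetric.hausdorffEdist (steinerProcessClosed u n K)
          (Metric.closedBall (0 : Plane) r)) atTop (𝓝 0)) :
    ∀ M : Set Plane, MeasurableSet M → volume M < ⊤ →
      ∀ r : ℝ, 0 ≤ r → volume (Metric.ball (0 : Plane) r) = volume M →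
        Tendsto (fun n => volume (symmDiff (steinerProcess u n M)
          (Metric.ball (0 : Plane) r))) atTop (𝓝 0) := by
  intro M hM hMfin r hr hrvol
  refine ENNReal.tendsto_nhds_zero.2 fun ε hε => ?_
  have hδ : ε / 4 ≠ 0 := (ENNReal.div_pos hε.ne' (by norm_num)).ne'
  have hB : volume (closedBall (0 : Plane) r) = volume M := by
    rw [Measure.addHaar_closedBall_eq_addHaar_ball, hrvol]
  obtain ⟨K, hKM, hK, hMK⟩ := hM.exists_isCompact_lt_add hMfin.ne hδ
  obtain ⟨η, hη, hD⟩ := (isCompact_closedBall (0 : Plane) r).exists_pos_measure_cthickening_lt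
    (c := volume M + ε / 4) (by rw [hB]; exact ENNReal.lt_add_right hMfin.ne hδ)
  filter_upwards [eventually_steinerProcess_subset_cthickening hcompact hK hr
    (hB ▸ measure_mono hKM) hη] with n hPD
  have hMvol := volume_steinerProcess hu hM n
  have hKvol := volume_steinerProcess hu hK.measurableSet n
  calc _ ≤ 4 * (ε / 4) :=
        measure_symmDiff_le_four_mul volume (steinerProcess_mono hKM n) hPD
          (ball_subset_closedBall.trans (self_subset_cthickening _))
          (measurableSet_steinerProcess hu hK.measurableSet n).nullMeasurableSet
          measurableSet_ball.nullMeasurableSet (hKvol ▸ hK.measure_lt_top.ne) (hrvol ▸ hMfin.ne)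
          (by rw [hMvol, hKvol]; exact hMK.le) (by rw [hrvol]; exact hD.le) (by rw [hMvol, hrvol])
    _ = ε := ENNReal.mul_div_cancel (by norm_num) (by norm_num)
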